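/- For y > 0, the lower bound c₁² · 2√y / (√π · erfi(√y)) ≤ ∫_0^1 (ψ(t+1) - log t) e^{-y t^2} dt holds, where c₁ = ∫_0^1 sqrt(ψ(t+1) - log t) dt and erfi(x) = -i·erf(ix), i.e., erfi(√y) = (2/√π) ∫_0^{√y} e^{u^2} du. -/

import Mathlib

open Real MeasureTheory Filter

/-- The digamma function: logarithmic derivative of the Gamma function. -/
noncomputable def digamma (x : ℝ) : ℝ := deriv (fun y => Real.log (Real.Gamma y)) x
/-- The imaginary error function. -/
noncomputable def erfi (x : ℝ) : ℝ := (2 / Real.sqrt π) * ∫ t in (0:ℝ)..x, Real.exp (t ^ 2)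

/-!
By Cauchy–Schwarz applied to `√f = √(f e^{-y t²}) · √(e^{y t²})`, with
`f t = ψ(t + 1) - log t`, we get `c₁² ≤ (∫₀¹ f e^{-y t²}) (∫₀¹ e^{y t²})`, and the
substitution `u = √y t` turns the last integral into `√π erfi (√y) / (2 √y)`. That `f ≥ 0` is
integrable on `(0, 1)` comes from the convexity of `log Γ`: `f` is the nonnegative derivative
of `log Γ (t + 1) - (t log t - t)`, which is continuous on `[0, 1]`.
-/

lemma hasDerivAt_log_Gamma {x : ℝ} (hx : 0 < x) :
    HasDerivAt (fun y => log (Gamma y)) (digamma x) x := by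
  have hx' : ∀ m : ℕ, x ≠ -m := fun m => by linarith [m.cast_nonneg (α := ℝ)]
  exact ((differentiableAt_Gamma hx').log (Gamma_pos_of_pos hx).ne').hasDerivAt

/-- `log Γ` is convex and `log Γ (t + 1) - log Γ t = log t`, so `log t` is a slope of `log Γ`
to the left of `t + 1`. -/
lemma log_le_digamma_add_one {t : ℝ} (ht : 0 < t) : log t ≤ digamma (t + 1) := by
  have hslope : slope (log ∘ Gamma) t (t + 1) = log t := by
    rw [slope_def_field, Function.comp_apply, Function.comp_apply, Gamma_add_one ht.ne',
      log_mul ht.ne' (Gamma_pos_of_pos ht).ne']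
    ring
  rw [← hslope]
  exact convexOn_log_Gamma.slope_le_deriv ht (by simp only [Set.mem_Ioi]; linarith)
    (by linarith) (hasDerivAt_log_Gamma (by linarith)).differentiableAt

lemma integrableOn_digamma_add_one_sub_log (b : ℝ) :
    IntegrableOn (fun t => digamma (t + 1) - log t) (Set.Ioc 0 b) := by
  refine intervalIntegral.integrableOn_deriv_of_nonneg
    (g := fun t => log (Gamma (t + 1)) - (t * log t - t)) ?_ (fun t ht => ?_)
    (fun t ht => sub_nonneg.2 (log_le_digamma_add_one ht.1))
  · refine .sub (fun t ht => ?_) (continuous_mul_log.sub continuous_id).continuousOn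
    have hΓ := (hasDerivAt_log_Gamma (by linarith [ht.1] : (0 : ℝ) < t + 1)).continuousAt
    exact (hΓ.comp (f := fun s : ℝ => s + 1) (by fun_prop)).continuousWithinAt
  · have hΓ :=
      (hasDerivAt_log_Gamma (by linarith [ht.1] : (0 : ℝ) < t + 1)).comp_add_const t 1
    exact (hΓ.sub ((hasDerivAt_mul_log ht.1.ne').sub (hasDerivAt_id t))).congr_deriv (by ring)

lemma sq_integral_sqrt_le_integral_div_mul_integral {α : Type*} [MeasurableSpace α]
    {μ : Measure α} {f w : α → ℝ} (hf : 0 ≤ᵐ[μ] f) (hw : ∀ᵐ x ∂μ, 0 < w x)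
    (hfw : Integrable (fun x => f x / w x) μ) (hwi : Integrable w μ) :
    (∫ x, √(f x) ∂μ) ^ 2 ≤ (∫ x, f x / w x ∂μ) * ∫ x, w x ∂μ := by
  have hfw_nonneg : 0 ≤ᵐ[μ] fun x => f x / w x := by
    filter_upwards [hf, hw] with x hfx hwx using div_nonneg hfx hwx.le
  have hw_nonneg : 0 ≤ᵐ[μ] w := by filter_upwards [hw] with x hx using hx.le
  have hmemLp {u : α → ℝ} (hu : Integrable u μ) (hu0 : 0 ≤ᵐ[μ] u) :
      MemLp (fun x => √(u x)) (ENNReal.ofReal 2) μ := by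
    rw [ENNReal.ofReal_ofNat, memLp_two_iff_integrable_sq
      (continuous_sqrt.comp_aestronglyMeasurable hu.aestronglyMeasurable)]
    refine hu.congr ?_
    filter_upwards [hu0] with x hx using (sq_sqrt hx).symm
  have hsq {u : α → ℝ} (hu0 : 0 ≤ᵐ[μ] u) : ∫ x, √(u x) ^ (2 : ℝ) ∂μ = ∫ x, u x ∂μ := by
    refine integral_congr_ae ?_
    filter_upwards [hu0] with x hx using by rw [rpow_two, sq_sqrt hx]
  have hprod : ∫ x, √(f x / w x) * √(w x) ∂μ = ∫ x, √(f x) ∂μ := by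
    refine integral_congr_ae ?_
    filter_upwards [hw, hfw_nonneg] with x hwx hx
    rw [← sqrt_mul hx, div_mul_cancel₀ _ hwx.ne']
  have holder := integral_mul_le_Lp_mul_Lq_of_nonneg HolderConjugate.two_two
    (Eventually.of_forall fun x => sqrt_nonneg (f x / w x))
    (Eventually.of_forall fun x => sqrt_nonneg (w x)) (hmemLp hfw hfw_nonneg)
    (hmemLp hwi hw_nonneg)
  rw [hprod, hsq hfw_nonneg, hsq hw_nonneg, ← sqrt_eq_rpow, ← sqrt_eq_rpow, ← sqrt_mul
    (integral_nonneg_of_ae hfw_nonneg)] at holder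
  calc (∫ x, √(f x) ∂μ) ^ 2 ≤ √((∫ x, f x / w x ∂μ) * ∫ x, w x ∂μ) ^ 2 :=
        pow_le_pow_left₀ (integral_nonneg fun x => sqrt_nonneg _) holder 2
    _ = _ := sq_sqrt (mul_nonneg (integral_nonneg_of_ae hfw_nonneg)
      (integral_nonneg_of_ae hw_nonneg))

lemma integrableOn_div_exp_mul_sq {f : ℝ → ℝ} {s : Set ℝ} (hf : IntegrableOn f s) {y : ℝ}
    (hy : 0 ≤ y) : IntegrableOn (fun t => f t / exp (y * t ^ 2)) s := by
  refine Integrable.mono hf (hf.aestronglyMeasurable.div₀ (by fun_prop))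
    (Eventually.of_forall fun t => ?_)
  rw [norm_div, norm_of_nonneg (exp_pos _).le]
  exact div_le_self (norm_nonneg _) (one_le_exp (by positivity))

lemma erfi_eq_mul_integral_zero_one (a : ℝ) :
    erfi a = 2 / √π * (a * ∫ t in (0 : ℝ)..1, exp ((a * t) ^ 2)) := by
  rw [erfi, intervalIntegral.mul_integral_comp_mul_left (f := fun u => exp (u ^ 2)), mul_zero,
    mul_one]

lemma setIntegral_Ioo_eq_intervalIntegral {E : Type*} [NormedAddCommGroup E] [NormedSpace ℝ E]
    {f : ℝ → E} {a b : ℝ} (hab : a ≤ b) :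
    ∫ t in Set.Ioo a b, f t = ∫ t in a..b, f t := by
  rw [intervalIntegral.integral_of_le hab, integral_Ioc_eq_integral_Ioo]

theorem hardy_integral_lower_piece (y : ℝ) (hy : 0 < y) :
    (∫ t in Set.Ioo (0 : ℝ) 1, Real.sqrt (digamma (t + 1) - Real.log t)) ^ 2 *
        (2 * Real.sqrt y) / (Real.sqrt π * erfi (Real.sqrt y)) ≤
      ∫ t in Set.Ioo (0 : ℝ) 1, (digamma (t + 1) - Real.log t) * Real.exp (-y * t ^ 2) := by
  have hexp : Continuous fun t : ℝ => exp (y * t ^ 2) := by fun_prop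
  have hC_pos : 0 < ∫ t in Set.Ioo (0 : ℝ) 1, exp (y * t ^ 2) := by
    rw [setIntegral_Ioo_eq_intervalIntegral zero_le_one]
    exact intervalIntegral.intervalIntegral_pos_of_pos_on (hexp.intervalIntegrable 0 1)
      (fun t _ => exp_pos _) zero_lt_one
  have hden : √π * erfi √y = (∫ t in Set.Ioo (0 : ℝ) 1, exp (y * t ^ 2)) * (2 * √y) := by
    simp_rw [erfi_eq_mul_integral_zero_one, mul_pow, sq_sqrt hy.le,
      setIntegral_Ioo_eq_intervalIntegral zero_le_one]
    field_simp
  rw [hden, mul_div_mul_right _ _ (by positivity), div_le_iff₀ hC_pos]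
  simp_rw [neg_mul, exp_neg, ← div_eq_mul_inv]
  exact sq_integral_sqrt_le_integral_div_mul_integral
    (ae_restrict_of_forall_mem measurableSet_Ioo fun t ht =>
      sub_nonneg.2 (log_le_digamma_add_one ht.1))
    (Eventually.of_forall fun t => exp_pos (y * t ^ 2))
    (integrableOn_div_exp_mul_sq ((integrableOn_digamma_add_one_sub_log 1).mono_set
      Set.Ioo_subset_Ioc_self) hy.le)
    (hexp.integrableOn_Icc.mono_set Set.Ioo_subset_Icc_self)
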